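/- Let 0 ≤ λ < 1. If f is analytic on the unit disc with f(0)=0, f'(0)=1, f and f' nonvanishing on the punctured disc, and |(1 + z f''(z)/f'(z))/(z f'(z)/f(z)) - 1| < (1-λ)/(2-λ)² for all z in the disc (i.e., f ∈ F_{(1-λ)/(2-λ)²}), then |z f'(z)/f(z) - 1| < 1 - λ throughout the disc, i.e., f ∈ S*(λ). -/

import Mathlib

/-- The open unit disc in `ℂ`. -/
def unitDisc : Set ℂ := Metric.ball 0 1

/-!
With `q(z) = f(z) / (z f'(z))` one computes
`(1 + z f''/f') / (z f'/f) - 1 = -z q'(z)`, so the hypothesis says that `z q'(z)` maps the disc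
into the disc of radius `c = (1-λ)/(2-λ)²`. By the Schwarz lemma `|q'| ≤ c`, hence
`|q(z) - 1| < c` since `q(0) = 1`. Therefore `|z f'/f - 1| = |1/q - 1| < c/(1-c) ≤ 1-λ`.
-/

open Metric Set Filter Topology

theorem norm_le_div_of_norm_mul_le {h : ℂ → ℂ} {R c : ℝ} (hd : DifferentiableOn ℂ h (ball 0 R))
    (hbound : ∀ z ∈ ball (0 : ℂ) R, ‖z * h z‖ ≤ c) {z : ℂ} (hz : z ∈ ball 0 R) :
    ‖h z‖ ≤ c / R := by
  set g : ℂ → ℂ := fun w => w * h w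
  have hgd : DifferentiableOn ℂ g (ball 0 R) := differentiableOn_id.mul hd
  have hmaps : MapsTo g (ball 0 R) (closedBall (g 0) c) := fun w hw => by
    simpa [g] using hbound w hw
  have hdslope : dslope g 0 z = h z := by
    rcases eq_or_ne z 0 with rfl | hz0
    · have hh : HasDerivAt h (deriv h 0) 0 :=
        (hd.differentiableAt (isOpen_ball.mem_nhds hz)).hasDerivAt
      rw [dslope_same, ((hasDerivAt_id' (0 : ℂ)).fun_mul hh).deriv]
      simp
    · simpa [g] using dslope_sub_smul_of_ne h hz0
  simpa [hdslope] using Complex.norm_dslope_le_div_of_mapsTo_ball hgd hmaps hz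

theorem norm_sub_le_of_norm_mul_deriv_le {q : ℂ → ℂ} {R c : ℝ}
    (hq : DifferentiableOn ℂ q (ball 0 R)) (hbound : ∀ z ∈ ball (0 : ℂ) R, ‖z * deriv q z‖ ≤ c)
    {z : ℂ} (hz : z ∈ ball 0 R) : ‖q z - q 0‖ ≤ c / R * ‖z‖ := by
  have h0 : (0 : ℂ) ∈ ball 0 R := mem_ball_self (pos_of_mem_ball hz)
  simpa using Convex.norm_image_sub_le_of_norm_deriv_le
    (fun w hw => hq.differentiableAt (isOpen_ball.mem_nhds hw))
    (fun w hw => norm_le_div_of_norm_mul_le (hq.deriv isOpen_ball) hbound hw)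
    (convex_ball 0 R) h0 hz

theorem norm_inv_sub_one_lt {w : ℂ} {c : ℝ} (hw : ‖w - 1‖ < c) (hc : c < 1) :
    ‖w⁻¹ - 1‖ < c / (1 - c) := by
  have hlow : 1 - c < ‖w‖ := by
    have := norm_sub_norm_le (1 : ℂ) w
    rw [norm_one, norm_sub_rev] at this
    linarith
  have hw0 : w ≠ 0 := norm_pos_iff.mp (by linarith)
  rw [show w⁻¹ - 1 = (1 - w) / w by field_simp, norm_div, norm_sub_rev,
    div_lt_div_iff₀ (by linarith) (by linarith)]
  nlinarith [norm_nonneg (w - 1)]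

theorem lt_one_and_div_one_sub_le {l : ℝ} (hl : l < 1) :
    (1 - l) / (2 - l) ^ 2 < 1 ∧
      (1 - l) / (2 - l) ^ 2 / (1 - (1 - l) / (2 - l) ^ 2) ≤ 1 - l := by
  have h2l : 0 < 2 - l := by linarith
  have hc_lt : (1 - l) / (2 - l) ^ 2 < 1 := (div_lt_one (by positivity)).mpr (by nlinarith)
  refine ⟨hc_lt, ?_⟩
  have hc_mul : (1 - l) / (2 - l) ^ 2 * (2 - l) = (1 - l) / (2 - l) := by
    field_simp
  have : (1 - l) / (2 - l) ≤ 1 - l := div_le_self (by linarith) (by linarith)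
  rw [div_le_iff₀ (by linarith)]
  linarith

/-- `f(z) / (z f'(z))`, extended by continuity to `z = 0`. -/
noncomputable def reciprocalStarlikeQuotient (f : ℂ → ℂ) (z : ℂ) : ℂ :=
  dslope f 0 z / deriv f z

namespace reciprocalStarlikeQuotient

variable {f : ℂ → ℂ}

theorem apply_of_ne_zero (hf0 : f 0 = 0) {z : ℂ} (hz : z ≠ 0) :
    reciprocalStarlikeQuotient f z = f z / (z * deriv f z) := by
  rw [reciprocalStarlikeQuotient, dslope_of_ne _ hz, slope_def_field, hf0, sub_zero, sub_zero,
    div_div]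

theorem apply_zero (hf'0 : deriv f 0 = 1) : reciprocalStarlikeQuotient f 0 = 1 := by
  simp [reciprocalStarlikeQuotient, dslope_same, hf'0]

theorem differentiableOn {s : Set ℂ} (hs : IsOpen s) (h0 : (0 : ℂ) ∈ s)
    (hf : DifferentiableOn ℂ f s) (hf' : ∀ z ∈ s, deriv f z ≠ 0) :
    DifferentiableOn ℂ (reciprocalStarlikeQuotient f) s :=
  ((Complex.differentiableOn_dslope (hs.mem_nhds h0)).mpr hf).div (hf.deriv hs) hf'

theorem mul_deriv_eq (hf0 : f 0 = 0) {z : ℂ} (hz : z ≠ 0)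
    (hdf : DifferentiableAt ℂ f z) (hdf' : DifferentiableAt ℂ (deriv f) z)
    (hf'z : deriv f z ≠ 0) :
    z * deriv (reciprocalStarlikeQuotient f) z =
      -((1 + z * deriv (deriv f) z / deriv f z) / (z * deriv f z / f z) - 1) := by
  have hev : reciprocalStarlikeQuotient f =ᶠ[𝓝 z] fun w => f w / (w * deriv f w) := by
    filter_upwards [isOpen_ne.mem_nhds hz] with w hw using apply_of_ne_zero hf0 hw
  rw [hev.deriv_eq, deriv_fun_div hdf (differentiableAt_fun_id.fun_mul hdf')
    (mul_ne_zero hz hf'z), deriv_fun_mul differentiableAt_fun_id hdf', deriv_id'']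
  field_simp
  ring

end reciprocalStarlikeQuotient

theorem stmt_13_general (l : ℝ) (f : ℂ → ℂ)
    (hl1 : l < 1)
    (hf : AnalyticOn ℂ f unitDisc) (hf0 : f 0 = 0) (hf'0 : deriv f 0 = 1)
    (hf'z : ∀ z ∈ unitDisc, z ≠ 0 → deriv f z ≠ 0)
    (hbd : ∀ z ∈ unitDisc, z ≠ 0 →
      ‖(1 + z * deriv (deriv f) z / deriv f z) / (z * deriv f z / f z) - 1‖
        < (1 - l) / (2 - l)^2) :
    ∀ z ∈ unitDisc, z ≠ 0 → ‖z * deriv f z / f z - 1‖ < 1 - l := by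
  intro z hz hz0
  set c := (1 - l) / (2 - l) ^ 2
  have hc_pos : 0 < c := div_pos (by linarith) (by nlinarith)
  obtain ⟨hc_lt, hc_le⟩ := lt_one_and_div_one_sub_le hl1
  set q := reciprocalStarlikeQuotient f
  have hdf : DifferentiableOn ℂ f unitDisc := hf.differentiableOn
  have hf'ne : ∀ w ∈ unitDisc, deriv f w ≠ 0 := fun w hw => by
    rcases eq_or_ne w 0 with rfl | hw0
    exacts [hf'0 ▸ one_ne_zero, hf'z w hw hw0]
  have hq : DifferentiableOn ℂ q unitDisc :=
    reciprocalStarlikeQuotient.differentiableOn isOpen_ball (mem_ball_self one_pos) hdf hf'ne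
  have hbound : ∀ w ∈ unitDisc, ‖w * deriv q w‖ ≤ c := fun w hw => by
    rcases eq_or_ne w 0 with rfl | hw0
    · simpa using hc_pos.le
    rw [reciprocalStarlikeQuotient.mul_deriv_eq hf0 hw0
      (hdf.differentiableAt (isOpen_ball.mem_nhds hw))
      ((hdf.deriv isOpen_ball).differentiableAt (isOpen_ball.mem_nhds hw))
      (hf'z w hw hw0), norm_neg]
    exact (hbd w hw hw0).le
  have hqz : ‖q z - 1‖ < c := by
    have := norm_sub_le_of_norm_mul_deriv_le hq hbound hz
    rw [show q 0 = 1 from reciprocalStarlikeQuotient.apply_zero hf'0, div_one] at this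
    exact this.trans_lt (mul_lt_of_lt_one_right hc_pos (mem_ball_zero_iff.mp hz))
  calc ‖z * deriv f z / f z - 1‖ = ‖(q z)⁻¹ - 1‖ := by
        rw [show q z = _ from reciprocalStarlikeQuotient.apply_of_ne_zero hf0 hz0, inv_div]
    _ < c / (1 - c) := norm_inv_sub_one_lt hqz hc_lt
    _ ≤ 1 - l := hc_le

/-- if `f ∈ F_c` with `c = (1-λ)/(2-λ)²`, i.e.
`|(1 + z f''/f')/(z f'/f) - 1| < (1-λ)/(2-λ)²`, then `|z f'/f - 1| < 1 - λ`,
i.e. `f ∈ S*(λ)`. -/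
theorem stmt_13 (l : ℝ) (f : ℂ → ℂ)
    (hl0 : 0 ≤ l) (hl1 : l < 1)
    (hf : AnalyticOn ℂ f unitDisc) (hf0 : f 0 = 0) (hf'0 : deriv f 0 = 1)
    (hfz : ∀ z ∈ unitDisc, z ≠ 0 → f z ≠ 0)
    (hf'z : ∀ z ∈ unitDisc, z ≠ 0 → deriv f z ≠ 0)
    (hbd : ∀ z ∈ unitDisc, z ≠ 0 →
      ‖(1 + z * deriv (deriv f) z / deriv f z) / (z * deriv f z / f z) - 1‖
        < (1 - l) / (2 - l)^2) :
    ∀ z ∈ unitDisc, z ≠ 0 → ‖z * deriv f z / f z - 1‖ < 1 - l :=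
  stmt_13_general l f hl1 hf hf0 hf'0 hf'z hbd
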